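/- For all n ≥ 1, the number of permutations of [n] avoiding both generalized patterns 3-12 and 2-13 equals 2^{n-1}. -/
import Mathlib

def contains312 {n : ℕ} (π : Equiv.Perm (Fin n)) : Prop :=
  ∃ i j : ℕ, ∃ (_ : i < j) (hj : j + 1 < n),
    π ⟨j, by omega⟩ < π ⟨j + 1, hj⟩ ∧ π ⟨j + 1, hj⟩ < π ⟨i, by omega⟩

def contains213 {n : ℕ} (π : Equiv.Perm (Fin n)) : Prop :=
  ∃ i j : ℕ, ∃ (_ : i < j) (hj : j + 1 < n),
    π ⟨j, by omega⟩ < π ⟨i, by omega⟩ ∧ π ⟨i, by omega⟩ < π ⟨j + 1, hj⟩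

set_option maxHeartbeats 1000000

namespace Stmt9

variable {m : ℕ}

/-- The combined avoidance condition: at every ascent, the bottom exceeds all earlier entries. -/
def Avoid (π : Equiv.Perm (Fin (m+1))) : Prop :=
  ∀ i j : ℕ, ∀ hij : i < j, ∀ hj : j + 1 < m + 1,
    π ⟨j, by omega⟩ < π ⟨j + 1, hj⟩ → π ⟨i, by omega⟩ < π ⟨j, by omega⟩

lemma avoid_iff (π : Equiv.Perm (Fin (m+1))) :
    (¬ contains312 π ∧ ¬ contains213 π) ↔ Avoid π := by
  constructor
  · rintro ⟨h312, h213⟩ i j hij hj hasc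
    rcases lt_trichotomy (π ⟨i, by omega⟩) (π ⟨j, by omega⟩) with h | h | h
    · exact h
    · exact absurd (π.injective h) (by simp [Fin.ext_iff]; omega)
    · exfalso
      rcases lt_trichotomy (π ⟨i, by omega⟩) (π ⟨j+1, hj⟩) with h2 | h2 | h2
      · exact h213 ⟨i, j, hij, hj, h, h2⟩
      · exact absurd (π.injective h2) (by simp [Fin.ext_iff]; omega)
      · exact h312 ⟨i, j, hij, hj, hasc, h2⟩
  · intro hA
    constructor
    · rintro ⟨i, j, hij, hj, hasc, hbig⟩
      have := hA i j hij hj hasc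
      exact absurd (this.trans (hasc.trans hbig)) (lt_irrefl _)
    · rintro ⟨i, j, hij, hj, h1, h2⟩
      have := hA i j hij hj (h1.trans h2)
      exact absurd (this.trans h1) (lt_irrefl _)


lemma mono_right_adj {π : Equiv.Perm (Fin (m+1))} (h : Avoid π) (j : ℕ)
    (hp : (π.symm (Fin.last m) : ℕ) ≤ j) (hj1 : j + 1 < m + 1) :
    π ⟨j + 1, hj1⟩ < π ⟨j, by omega⟩ := by
  set p := π.symm (Fin.last m) with hpdef
  by_contra hcon
  have hne : π ⟨j + 1, hj1⟩ ≠ π ⟨j, by omega⟩ := by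
    intro he
    exact absurd (π.injective he) (by simp [Fin.ext_iff])
  have hasc : π ⟨j, by omega⟩ < π ⟨j + 1, hj1⟩ := lt_of_le_of_ne (not_lt.mp hcon) (Ne.symm hne)
  have hple : π ⟨j, by omega⟩ ≤ Fin.last m := Fin.le_last _
  have hplast : π p = Fin.last m := π.apply_symm_apply _
  rcases eq_or_lt_of_le hp with he | hlt
  · have : (⟨j, by omega⟩ : Fin (m+1)) = p := by
      apply Fin.ext; simpa using he.symm
    rw [this, hplast] at hasc
    exact absurd (lt_of_le_of_lt (Fin.le_last _) hasc) (lt_irrefl _)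
  · have := h (p : ℕ) j hlt hj1 hasc
    have hpe : (⟨(p : ℕ), by omega⟩ : Fin (m+1)) = p := Fin.eta _ _
    rw [hpe, hplast] at this
    exact absurd (lt_of_le_of_lt hple this) (lt_irrefl _)

lemma mono_right {π : Equiv.Perm (Fin (m+1))} (h : Avoid π) (j k : ℕ) (hk : k < m + 1)
    (hp : (π.symm (Fin.last m) : ℕ) ≤ j) (hjk : j < k) :
    π ⟨k, hk⟩ < π ⟨j, by omega⟩ := by
  induction k, hjk using Nat.le_induction with
  | base => exact mono_right_adj h j hp hk
  | succ k hjk ih =>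
      exact lt_trans (mono_right_adj h k (by omega) hk) (ih (by omega))

lemma mono_left_adj {π : Equiv.Perm (Fin (m+1))} (h : Avoid π) (j : ℕ)
    (hj1 : j + 1 < m + 1) (hp : j + 1 ≤ (π.symm (Fin.last m) : ℕ)) :
    π ⟨j, by omega⟩ < π ⟨j + 1, hj1⟩ := by
  set p := π.symm (Fin.last m) with hpdef
  have hplast : π p = Fin.last m := π.apply_symm_apply _
  by_contra hcon
  have hne : π ⟨j, by omega⟩ ≠ π ⟨j + 1, by omega⟩ := by
    intro he
    exact absurd (π.injective he) (by simp [Fin.ext_iff])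
  have hdesc : π ⟨j + 1, by omega⟩ < π ⟨j, by omega⟩ := lt_of_le_of_ne (not_lt.mp hcon) (Ne.symm hne)
  have key : ∀ k, j + 1 ≤ k → ∀ hkp : k ≤ (p : ℕ), π ⟨k, by omega⟩ ≤ π ⟨j + 1, by omega⟩ := by
    intro k hk
    induction k, hk using Nat.le_induction with
    | base => intro _; exact le_refl _
    | succ k hk ih =>
        intro hkp
        have hkp' : k ≤ (p : ℕ) := by omega
        have hk1 : k + 1 < m + 1 := by omega
        have hih := ih hkp'
        by_contra hcon2
        have hasc : π ⟨k, by omega⟩ < π ⟨k + 1, hk1⟩ :=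
          lt_of_le_of_lt hih (lt_of_not_ge hcon2)
        have := h j k (by omega) hk1 hasc
        exact absurd (lt_trans (lt_of_lt_of_le this hih) hdesc) (lt_irrefl _)
  have hfin := key (p : ℕ) hp (le_refl _)
  have hpe : (⟨(p : ℕ), by omega⟩ : Fin (m+1)) = p := Fin.eta _ _
  rw [hpe, hplast] at hfin
  exact absurd (lt_of_le_of_lt hfin (lt_of_lt_of_le hdesc (Fin.le_last _))) (lt_irrefl _)

lemma mono_left {π : Equiv.Perm (Fin (m+1))} (h : Avoid π) (j k : ℕ) (hk : k < m + 1)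
    (hjk : j < k) (hkp : k ≤ (π.symm (Fin.last m) : ℕ)) :
    π ⟨j, by omega⟩ < π ⟨k, hk⟩ := by
  induction k, hjk using Nat.le_induction with
  | base => exact mono_left_adj h j hk hkp
  | succ k hjk ih =>
      exact lt_trans (ih (by omega) (by omega)) (mono_left_adj h k hk (by omega))

section Construction

variable (g : Fin m → Bool)


lemma bool_cases (b : Bool) : b = false ∨ b = true := by
  rcases Bool.eq_false_or_eq_true b with h | h
  · exact Or.inr h
  · exact Or.inl h

def mg : ℕ := (Finset.univ.filter fun u : Fin m => g u = true).card
def fg : ℕ := (Finset.univ.filter fun u : Fin m => g u = false).card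
def ctT (k : ℕ) : ℕ := (Finset.univ.filter fun u : Fin m => g u = true ∧ (u : ℕ) < k).card
def ctF (k : ℕ) : ℕ := (Finset.univ.filter fun u : Fin m => g u = false ∧ (u : ℕ) < k).card

lemma mg_le : mg g ≤ m := by
  classical
  calc mg g ≤ Finset.univ.card := Finset.card_filter_le _ _
  _ = m := by simp

lemma mg_add_fg : mg g + fg g = m := by
  classical
  have := Finset.card_filter_add_card_filter_not
    (s := (Finset.univ : Finset (Fin m))) (p := fun u => g u = true)
  simp only [Finset.card_univ, Fintype.card_fin, Bool.not_eq_true] at this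
  exact this

lemma ctT_mono {k k' : ℕ} (h : k ≤ k') : ctT g k ≤ ctT g k' := by
  apply Finset.card_le_card
  intro u hu
  simp only [Finset.mem_filter] at hu ⊢
  exact ⟨hu.1, hu.2.1, by omega⟩

lemma ctF_mono {k k' : ℕ} (h : k ≤ k') : ctF g k ≤ ctF g k' := by
  apply Finset.card_le_card
  intro u hu
  simp only [Finset.mem_filter] at hu ⊢
  exact ⟨hu.1, hu.2.1, by omega⟩

lemma ctT_le_mg (k : ℕ) : ctT g k ≤ mg g := by
  apply Finset.card_le_card
  intro u hu
  simp only [Finset.mem_filter] at hu ⊢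
  exact ⟨hu.1, hu.2.1⟩

lemma ctF_le_fg (k : ℕ) : ctF g k ≤ fg g := by
  apply Finset.card_le_card
  intro u hu
  simp only [Finset.mem_filter] at hu ⊢
  exact ⟨hu.1, hu.2.1⟩

lemma ctT_lt_of {u : Fin m} (hu : g u = true) {k : ℕ} (hk : (u : ℕ) < k) :
    ctT g (u : ℕ) < ctT g k := by
  apply Finset.card_lt_card
  rw [Finset.ssubset_iff_of_subset]
  · exact ⟨u, by simp [hu, hk], by simp⟩
  · intro w hw
    simp only [Finset.mem_filter] at hw ⊢
    exact ⟨hw.1, hw.2.1, by omega⟩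

lemma ctF_lt_of {u : Fin m} (hu : g u = false) {k : ℕ} (hk : (u : ℕ) < k) :
    ctF g (u : ℕ) < ctF g k := by
  apply Finset.card_lt_card
  rw [Finset.ssubset_iff_of_subset]
  · exact ⟨u, by simp [hu, hk], by simp⟩
  · intro w hw
    simp only [Finset.mem_filter] at hw ⊢
    exact ⟨hw.1, hw.2.1, by omega⟩

lemma ctT_lt_mg {u : Fin m} (hu : g u = true) : ctT g (u : ℕ) < mg g := by
  apply Finset.card_lt_card
  rw [Finset.ssubset_iff_of_subset]
  · exact ⟨u, by simp [hu], by simp⟩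
  · intro w hw
    simp only [Finset.mem_filter] at hw ⊢
    exact ⟨hw.1, hw.2.1⟩

lemma ctF_lt_fg {u : Fin m} (hu : g u = false) : ctF g (u : ℕ) < fg g := by
  apply Finset.card_lt_card
  rw [Finset.ssubset_iff_of_subset]
  · exact ⟨u, by simp [hu], by simp⟩
  · intro w hw
    simp only [Finset.mem_filter] at hw ⊢
    exact ⟨hw.1, hw.2.1⟩

def sigmaFun (v : Fin (m+1)) : Fin (m+1) :=
  if h : (v : ℕ) < m then
    (if g ⟨v, h⟩ then ⟨ctT g v, by have := (ctT_le_mg g (v:ℕ)).trans (mg_le g); omega⟩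
      else ⟨m - ctF g v, by omega⟩)
  else ⟨mg g, by have := mg_le g; omega⟩

lemma sigma_last : sigmaFun g (Fin.last m) = ⟨mg g, by have := mg_le g; omega⟩ := by
  simp [sigmaFun]

lemma sigma_true {v : Fin (m+1)} (h : (v : ℕ) < m) (hg : g ⟨v, h⟩ = true) :
    sigmaFun g v = ⟨ctT g (v : ℕ), by have := (ctT_le_mg g (v:ℕ)).trans (mg_le g); omega⟩ := by
  simp [sigmaFun, h, hg]

lemma sigma_false {v : Fin (m+1)} (h : (v : ℕ) < m) (hg : g ⟨v, h⟩ = false) :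
    sigmaFun g v = ⟨m - ctF g (v : ℕ), by omega⟩ := by
  simp [sigmaFun, h, hg]

lemma sigma_false_gt {v : Fin (m+1)} (h : (v : ℕ) < m) (hg : g ⟨v, h⟩ = false) :
    mg g < (sigmaFun g v : ℕ) := by
  rw [sigma_false g h hg]
  have h2 := ctF_lt_fg g hg
  have h3 := mg_add_fg g
  simp only [Fin.val_mk] at h2 ⊢
  omega

lemma sigma_true_lt_mg {v : Fin (m+1)} (h : (v : ℕ) < m) (hg : g ⟨v, h⟩ = true) :
    (sigmaFun g v : ℕ) < mg g := by
  rw [sigma_true g h hg]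
  simpa using ctT_lt_mg g hg

lemma sigma_lt_of_lt {v w : Fin (m+1)} (hvw : v < w) (hv : (v : ℕ) < m)
    (hgv : g ⟨v, hv⟩ = true) (hw : (w : ℕ) < m) (hgw : g ⟨w, hw⟩ = true) :
    sigmaFun g v < sigmaFun g w := by
  rw [sigma_true g hv hgv, sigma_true g hw hgw]
  have := ctT_lt_of g hgv (k := (w : ℕ)) (by simpa using hvw)
  simpa using this

lemma sigma_gt_of_lt {v w : Fin (m+1)} (hvw : v < w) (hv : (v : ℕ) < m)
    (hgv : g ⟨v, hv⟩ = false) (hw : (w : ℕ) < m) (hgw : g ⟨w, hw⟩ = false) :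
    sigmaFun g w < sigmaFun g v := by
  rw [sigma_false g hv hgv, sigma_false g hw hgw]
  have h1 := ctF_lt_of g hgv (k := (w : ℕ)) (by simpa using hvw)
  have h2 := ctF_le_fg g (w : ℕ)
  have h3 := mg_add_fg g
  simp only [Fin.val_mk] at h1 ⊢
  rw [Fin.mk_lt_mk]
  omega

lemma sigma_ne_of_lt {v w : Fin (m+1)} (hvw : v < w) : sigmaFun g v ≠ sigmaFun g w := by
  have hv : (v : ℕ) < m := by
    have := w.isLt
    have := Fin.lt_iff_val_lt_val.mp hvw
    omega
  by_cases hw : (w : ℕ) < m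
  · rcases bool_cases (g ⟨v, hv⟩) with hgv | hgv <;>
      rcases bool_cases (g ⟨w, hw⟩) with hgw | hgw
    · exact (sigma_gt_of_lt g hvw hv hgv hw hgw).ne'
    · -- v false, w true : sigma v > mg > sigma w
      have h1 := sigma_false_gt g hv hgv
      have h2 := sigma_true_lt_mg g hw hgw
      intro he
      rw [he] at h1
      omega
    · -- v true, w false
      have h1 := sigma_true_lt_mg g hv hgv
      have h2 := sigma_false_gt g hw hgw
      intro he
      rw [he] at h1
      omega
    · exact (sigma_lt_of_lt g hvw hv hgv hw hgw).ne
  · -- w = last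
    have hsw : (sigmaFun g w : ℕ) = mg g := by
      have hwl : w = Fin.last m := Fin.ext (by simp; omega)
      rw [hwl, sigma_last]
    rcases bool_cases (g ⟨v, hv⟩) with hgv | hgv
    · have h1 := sigma_false_gt g hv hgv
      intro he
      rw [he, hsw] at h1
      omega
    · have h1 := sigma_true_lt_mg g hv hgv
      intro he
      rw [he] at h1
      omega

lemma sigma_inj : Function.Injective (sigmaFun g) := by
  intro v w he
  rcases lt_trichotomy v w with hlt | heq | hlt
  · exact absurd he (sigma_ne_of_lt g hlt)
  · exact heq
  · exact absurd he.symm (sigma_ne_of_lt g hlt)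

lemma T1 {v w : Fin (m+1)} (h1 : sigmaFun g v < sigmaFun g w)
    (h2 : (sigmaFun g w : ℕ) ≤ mg g) : v < w := by
  rcases lt_trichotomy v w with hlt | heq | hlt
  · exact hlt
  · rw [heq] at h1; exact absurd h1 (lt_irrefl _)
  · exfalso
    have hw : (w : ℕ) < m := by
      have := v.isLt
      have := Fin.lt_iff_val_lt_val.mp hlt
      omega
    rcases bool_cases (g ⟨w, hw⟩) with hgw | hgw
    · have := sigma_false_gt g hw hgw
      omega
    · by_cases hv : (v : ℕ) < m
      · rcases bool_cases (g ⟨v, hv⟩) with hgv | hgv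
        · have h3 := sigma_false_gt g hv hgv
          have h4 := Fin.lt_iff_val_lt_val.mp h1
          omega
        · exact absurd (sigma_lt_of_lt g hlt hw hgw hv hgv) (asymm h1)
      · have hvl : v = Fin.last m := Fin.ext (by simp; omega)
        have h3 : (sigmaFun g v : ℕ) = mg g := by rw [hvl, sigma_last]
        have h4 := Fin.lt_iff_val_lt_val.mp h1
        omega

lemma T2 {v w : Fin (m+1)} (h1 : sigmaFun g v < sigmaFun g w)
    (h2 : mg g ≤ (sigmaFun g v : ℕ)) : w < v := by
  rcases lt_trichotomy w v with hlt | heq | hlt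
  · exact hlt
  · rw [heq] at h1; exact absurd h1 (lt_irrefl _)
  · exfalso
    have hv : (v : ℕ) < m := by
      have := w.isLt
      have := Fin.lt_iff_val_lt_val.mp hlt
      omega
    rcases bool_cases (g ⟨v, hv⟩) with hgv | hgv
    · by_cases hw : (w : ℕ) < m
      · rcases bool_cases (g ⟨w, hw⟩) with hgw | hgw
        · exact absurd (sigma_gt_of_lt g hlt hv hgv hw hgw) (asymm h1)
        · have h3 := sigma_true_lt_mg g hw hgw
          have h4 := sigma_false_gt g hv hgv
          have h5 := Fin.lt_iff_val_lt_val.mp h1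
          omega
      · have hwl : w = Fin.last m := Fin.ext (by simp; omega)
        have h3 : (sigmaFun g w : ℕ) = mg g := by rw [hwl, sigma_last]
        have h4 := sigma_false_gt g hv hgv
        have h5 := Fin.lt_iff_val_lt_val.mp h1
        omega
    · have := sigma_true_lt_mg g hv hgv
      omega

noncomputable def permOf : Equiv.Perm (Fin (m+1)) :=
  (Equiv.ofBijective (sigmaFun g) (Finite.injective_iff_bijective.mp (sigma_inj g))).symm

lemma permOf_symm_apply (v : Fin (m+1)) : (permOf g).symm v = sigmaFun g v := rfl

lemma sigma_permOf (x : Fin (m+1)) : sigmaFun g (permOf g x) = x := by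
  rw [← permOf_symm_apply]
  exact (permOf g).symm_apply_apply x

lemma avoid_permOf : Avoid (permOf g) := by
  intro i j hij hj hasc
  have hsj : sigmaFun g (permOf g ⟨j, by omega⟩) = ⟨j, by omega⟩ := sigma_permOf g _
  have hsj1 : sigmaFun g (permOf g ⟨j + 1, hj⟩) = ⟨j + 1, hj⟩ := sigma_permOf g _
  have hsi : sigmaFun g (permOf g ⟨i, by omega⟩) = ⟨i, by omega⟩ := sigma_permOf g _
  have hjmg : j + 1 ≤ mg g := by
    by_contra hcon
    have h1 : sigmaFun g (permOf g ⟨j, by omega⟩) < sigmaFun g (permOf g ⟨j + 1, hj⟩) :=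
      lt_of_lt_of_eq (lt_of_eq_of_lt hsj (Fin.mk_lt_mk.mpr (by omega))) hsj1.symm
    have h2 : mg g ≤ (sigmaFun g (permOf g ⟨j, by omega⟩) : ℕ) := by
      rw [hsj]; simp only [Fin.val_mk]; omega
    exact absurd (T2 g h1 h2) (asymm hasc)
  have h1 : sigmaFun g (permOf g ⟨i, by omega⟩) < sigmaFun g (permOf g ⟨j, by omega⟩) :=
    lt_of_lt_of_eq (lt_of_eq_of_lt hsi (Fin.mk_lt_mk.mpr hij)) hsj.symm
  have h2 : (sigmaFun g (permOf g ⟨j, by omega⟩) : ℕ) ≤ mg g := by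
    rw [hsj]; simp only [Fin.val_mk]; omega
  exact T1 g h1 h2

lemma castSucc_eta {v : Fin (m+1)} (h : (v : ℕ) < m) :
    Fin.castSucc (⟨(v : ℕ), h⟩ : Fin m) = v := by
  apply Fin.ext; simp

lemma card_pos_count (π : Equiv.Perm (Fin (m+1))) (Q : ℕ → Prop) [DecidablePred Q]
    (hQp : ∀ a, Q a → a < m + 1 ∧ a ≠ (π.symm (Fin.last m) : ℕ)) :
    (Finset.univ.filter fun u : Fin m => Q ((π.symm u.castSucc : Fin (m+1)) : ℕ)).card
      = ((Finset.range (m+1)).filter Q).card := by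
  have hval : ∀ a (ha : a ∈ (Finset.range (m+1)).filter Q),
      ((π ⟨a, (hQp a (Finset.mem_filter.mp ha).2).1⟩ : Fin (m+1)) : ℕ) < m := by
    intro a ha
    apply Fin.val_lt_last
    intro he
    have h2 : (⟨a, (hQp a (Finset.mem_filter.mp ha).2).1⟩ : Fin (m+1)) = π.symm (Fin.last m) :=
      (Equiv.eq_symm_apply π).mpr he
    exact (hQp a (Finset.mem_filter.mp ha).2).2 (by rw [← h2])
  refine Finset.card_bij' (fun u _ => ((π.symm u.castSucc : Fin (m+1)) : ℕ))
    (fun a ha => (⟨((π ⟨a, (hQp a (Finset.mem_filter.mp ha).2).1⟩ : Fin (m+1)) : ℕ),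
      hval a ha⟩ : Fin m)) ?_ ?_ ?_ ?_
  · intro u hu
    simp only [Finset.mem_filter, Finset.mem_range] at hu ⊢
    exact ⟨(π.symm u.castSucc).isLt, hu.2⟩
  · intro a ha
    simp only [Finset.mem_filter, Finset.mem_univ, true_and]
    have e : Fin.castSucc (⟨((π ⟨a, (hQp a (Finset.mem_filter.mp ha).2).1⟩ : Fin (m+1)) : ℕ),
        hval a ha⟩ : Fin m) = π ⟨a, (hQp a (Finset.mem_filter.mp ha).2).1⟩ :=
      castSucc_eta _
    rw [e, Equiv.symm_apply_apply]
    exact (Finset.mem_filter.mp ha).2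
  · intro u hu
    apply Fin.ext
    have e : (⟨((π.symm u.castSucc : Fin (m+1)) : ℕ), (π.symm u.castSucc).isLt⟩ : Fin (m+1))
        = π.symm u.castSucc := Fin.eta _ _
    simp only [e, Equiv.apply_symm_apply]
    simp
  · intro a ha
    have e : Fin.castSucc (⟨((π ⟨a, (hQp a (Finset.mem_filter.mp ha).2).1⟩ : Fin (m+1)) : ℕ),
        hval a ha⟩ : Fin m) = π ⟨a, (hQp a (Finset.mem_filter.mp ha).2).1⟩ :=
      castSucc_eta _
    simp only [e, Equiv.symm_apply_apply]

end Construction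
section Inverse

def gOf (π : Equiv.Perm (Fin (m+1))) : Fin m → Bool :=
  fun u => decide ((π.symm u.castSucc : Fin (m+1)) < π.symm (Fin.last m))

variable {π : Equiv.Perm (Fin (m+1))}

lemma gOf_true_iff (u : Fin m) :
    gOf π u = true ↔ ((π.symm u.castSucc : Fin (m+1)) : ℕ) < ((π.symm (Fin.last m) : Fin (m+1)) : ℕ) := by
  unfold gOf
  rw [decide_eq_true_eq]
  exact Fin.lt_iff_val_lt_val

lemma pos_ne_p (u : Fin m) :
    ((π.symm u.castSucc : Fin (m+1)) : ℕ) ≠ ((π.symm (Fin.last m) : Fin (m+1)) : ℕ) := by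
  intro he
  have h2 : π.symm u.castSucc = π.symm (Fin.last m) := Fin.ext he
  have h3 : u.castSucc = Fin.last m := π.symm.injective h2
  have := congrArg Fin.val h3
  simp at this
  omega

lemma mg_gOf : mg (gOf π) = ((π.symm (Fin.last m) : Fin (m+1)) : ℕ) := by
  classical
  have hp := (π.symm (Fin.last m)).isLt
  have h1 : (Finset.univ.filter fun u : Fin m => gOf π u = true)
      = (Finset.univ.filter fun u : Fin m =>
          ((π.symm u.castSucc : Fin (m+1)) : ℕ) < ((π.symm (Fin.last m) : Fin (m+1)) : ℕ)) := by
    ext u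
    simp only [Finset.mem_filter, Finset.mem_univ, true_and]
    exact gOf_true_iff u
  rw [mg, h1, card_pos_count π (fun a => a < ((π.symm (Fin.last m) : Fin (m+1)) : ℕ))
    (fun a ha => ⟨by omega, by omega⟩)]
  have h2 : (Finset.range (m+1)).filter (fun a => a < ((π.symm (Fin.last m) : Fin (m+1)) : ℕ))
      = Finset.range ((π.symm (Fin.last m) : Fin (m+1)) : ℕ) := by
    ext a
    simp only [Finset.mem_filter, Finset.mem_range]
    omega
  rw [h2, Finset.card_range]

lemma ctT_gOf (hA : Avoid π) (v : Fin (m+1))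
    (hv : ((π.symm v : Fin (m+1)) : ℕ) < ((π.symm (Fin.last m) : Fin (m+1)) : ℕ)) :
    ctT (gOf π) (v : ℕ) = ((π.symm v : Fin (m+1)) : ℕ) := by
  classical
  have hp := (π.symm (Fin.last m)).isLt
  have hs := (π.symm v).isLt
  have h1 : (Finset.univ.filter fun u : Fin m => gOf π u = true ∧ (u : ℕ) < (v : ℕ))
      = (Finset.univ.filter fun u : Fin m =>
          ((π.symm u.castSucc : Fin (m+1)) : ℕ) < ((π.symm v : Fin (m+1)) : ℕ)) := by
    ext u
    simp only [Finset.mem_filter, Finset.mem_univ, true_and, gOf_true_iff]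
    constructor
    · rintro ⟨h2, h3⟩
      by_contra h4
      push_neg at h4
      rcases eq_or_lt_of_le h4 with h5 | h5
      · have h6 : π.symm u.castSucc = π.symm v := Fin.ext h5.symm
        have h7 : u.castSucc = v := π.symm.injective h6
        have := congrArg Fin.val h7
        simp at this
        omega
      · have h6 := mono_left hA ((π.symm v : Fin (m+1)) : ℕ)
          ((π.symm u.castSucc : Fin (m+1)) : ℕ) (by omega) h5 (by omega)
        rw [Fin.eta, Fin.eta, Equiv.apply_symm_apply, Equiv.apply_symm_apply] at h6
        have := Fin.lt_iff_val_lt_val.mp h6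
        simp at this
        omega
    · intro h2
      have h6 := mono_left hA ((π.symm u.castSucc : Fin (m+1)) : ℕ)
        ((π.symm v : Fin (m+1)) : ℕ) (by omega) h2 (by omega)
      rw [Fin.eta, Fin.eta, Equiv.apply_symm_apply, Equiv.apply_symm_apply] at h6
      have h7 := Fin.lt_iff_val_lt_val.mp h6
      simp at h7
      exact ⟨by omega, h7⟩
  rw [ctT, h1, card_pos_count π (fun a => a < ((π.symm v : Fin (m+1)) : ℕ))
    (fun a ha => ⟨by omega, by omega⟩)]
  have h2 : (Finset.range (m+1)).filter (fun a => a < ((π.symm v : Fin (m+1)) : ℕ))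
      = Finset.range ((π.symm v : Fin (m+1)) : ℕ) := by
    ext a
    simp only [Finset.mem_filter, Finset.mem_range]
    omega
  rw [h2, Finset.card_range]

lemma ctF_gOf (hA : Avoid π) (v : Fin (m+1))
    (hv : ((π.symm (Fin.last m) : Fin (m+1)) : ℕ) < ((π.symm v : Fin (m+1)) : ℕ)) :
    ctF (gOf π) (v : ℕ) = m - ((π.symm v : Fin (m+1)) : ℕ) := by
  classical
  have hp := (π.symm (Fin.last m)).isLt
  have hs := (π.symm v).isLt
  have h1 : (Finset.univ.filter fun u : Fin m => gOf π u = false ∧ (u : ℕ) < (v : ℕ))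
      = (Finset.univ.filter fun u : Fin m =>
          ((π.symm v : Fin (m+1)) : ℕ) < ((π.symm u.castSucc : Fin (m+1)) : ℕ)
            ∧ ((π.symm u.castSucc : Fin (m+1)) : ℕ) < m + 1) := by
    ext u
    have hne := pos_ne_p (π := π) u
    simp only [Finset.mem_filter, Finset.mem_univ, true_and]
    rw [← Bool.not_eq_true, gOf_true_iff]
    constructor
    · rintro ⟨h2, h3⟩
      push_neg at h2
      refine ⟨?_, (π.symm u.castSucc).isLt⟩
      by_contra h4
      push_neg at h4
      rcases eq_or_lt_of_le h4 with h5 | h5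
      · have h6 : π.symm u.castSucc = π.symm v := Fin.ext h5
        have h7 : u.castSucc = v := π.symm.injective h6
        have := congrArg Fin.val h7
        simp at this
        omega
      · have h6 := mono_right hA ((π.symm u.castSucc : Fin (m+1)) : ℕ)
          ((π.symm v : Fin (m+1)) : ℕ) (by omega) (by omega) h5
        rw [Fin.eta, Fin.eta, Equiv.apply_symm_apply, Equiv.apply_symm_apply] at h6
        have := Fin.lt_iff_val_lt_val.mp h6
        simp at this
        omega
    · rintro ⟨h2, -⟩
      have h6 := mono_right hA ((π.symm v : Fin (m+1)) : ℕ)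
        ((π.symm u.castSucc : Fin (m+1)) : ℕ) (by omega) (by omega) h2
      rw [Fin.eta, Fin.eta, Equiv.apply_symm_apply, Equiv.apply_symm_apply] at h6
      have h7 := Fin.lt_iff_val_lt_val.mp h6
      simp at h7
      exact ⟨by omega, h7⟩
  rw [ctF, h1, card_pos_count π
    (fun a => ((π.symm v : Fin (m+1)) : ℕ) < a ∧ a < m + 1)
    (fun a ha => ⟨by omega, by omega⟩)]
  have h2 : (Finset.range (m+1)).filter
      (fun a => ((π.symm v : Fin (m+1)) : ℕ) < a ∧ a < m + 1)
      = Finset.Ico (((π.symm v : Fin (m+1)) : ℕ) + 1) (m + 1) := by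
    ext a
    simp only [Finset.mem_filter, Finset.mem_range, Finset.mem_Ico]
    omega
  rw [h2, Nat.card_Ico]
  omega

lemma sigma_gOf (hA : Avoid π) : sigmaFun (gOf π) = fun v => π.symm v := by
  classical
  funext v
  have hp := (π.symm (Fin.last m)).isLt
  have hs := (π.symm v).isLt
  by_cases hv : (v : ℕ) < m
  · have hcs : Fin.castSucc (⟨(v : ℕ), hv⟩ : Fin m) = v := castSucc_eta hv
    have hvlast : v ≠ Fin.last m := by
      intro he
      rw [he] at hv
      simp at hv
    have hsne : ((π.symm v : Fin (m+1)) : ℕ) ≠ ((π.symm (Fin.last m) : Fin (m+1)) : ℕ) := by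
      intro he
      exact hvlast (π.symm.injective (Fin.ext he))
    by_cases hlt : ((π.symm v : Fin (m+1)) : ℕ) < ((π.symm (Fin.last m) : Fin (m+1)) : ℕ)
    · have hg : gOf π ⟨(v : ℕ), hv⟩ = true := by
        rw [gOf_true_iff, hcs]
        exact hlt
      rw [sigma_true _ hv hg]
      exact Fin.ext (by simpa using ctT_gOf hA v hlt)
    · have hgt : ((π.symm (Fin.last m) : Fin (m+1)) : ℕ) < ((π.symm v : Fin (m+1)) : ℕ) := by
        omega
      have hg : gOf π ⟨(v : ℕ), hv⟩ = false := by
        rw [← Bool.not_eq_true, gOf_true_iff, hcs]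
        omega
      rw [sigma_false _ hv hg]
      apply Fin.ext
      simp only [Fin.val_mk]
      rw [ctF_gOf hA v hgt]
      omega
  · have hvl : v = Fin.last m := Fin.ext (by have := v.isLt; simp; omega)
    subst hvl
    rw [sigma_last]
    exact Fin.ext (by simpa using mg_gOf (π := π))

lemma permOf_gOf (hA : Avoid π) : permOf (gOf π) = π := by
  have h1 : Equiv.ofBijective (sigmaFun (gOf π))
      (Finite.injective_iff_bijective.mp (sigma_inj (gOf π))) = π.symm := by
    apply Equiv.ext
    intro v
    exact congrFun (sigma_gOf hA) v
  rw [permOf, h1, Equiv.symm_symm]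

lemma gOf_permOf (g : Fin m → Bool) : gOf (permOf g) = g := by
  funext u
  have hv : ((u.castSucc : Fin (m+1)) : ℕ) < m := by simp
  have he : (⟨((u.castSucc : Fin (m+1)) : ℕ), hv⟩ : Fin m) = u := Fin.ext (by simp)
  have hlast : (permOf g).symm (Fin.last m) = sigmaFun g (Fin.last m) := permOf_symm_apply g _
  have hcs : (permOf g).symm u.castSucc = sigmaFun g u.castSucc := permOf_symm_apply g _
  rcases bool_cases (g u) with hu | hu
  · have hgt : mg g < (sigmaFun g u.castSucc : ℕ) :=
      sigma_false_gt g hv (by rw [he]; exact hu)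
    rw [hu]
    simp only [gOf, hlast, hcs, sigma_last]
    simp only [Fin.lt_iff_val_lt_val, Fin.val_mk]
    rw [decide_eq_false_iff_not]
    omega
  · have hlt : (sigmaFun g u.castSucc : ℕ) < mg g :=
      sigma_true_lt_mg g hv (by rw [he]; exact hu)
    rw [hu]
    simp only [gOf, hlast, hcs, sigma_last]
    simp only [Fin.lt_iff_val_lt_val, Fin.val_mk]
    rw [decide_eq_true_eq]
    omega

end Inverse
end Stmt9

theorem stmt9 (n : ℕ) (hn : 1 ≤ n) :
    Nat.card {π : Equiv.Perm (Fin n) // ¬ contains312 π ∧ ¬ contains213 π} = 2 ^ (n - 1) := by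
  rcases n with _ | m
  · omega
  · have E : {π : Equiv.Perm (Fin (m+1)) // ¬ contains312 π ∧ ¬ contains213 π} ≃ (Fin m → Bool) :=
      { toFun := fun π => Stmt9.gOf π.1
        invFun := fun g => ⟨Stmt9.permOf g, (Stmt9.avoid_iff _).mpr (Stmt9.avoid_permOf g)⟩
        left_inv := fun π => Subtype.ext (Stmt9.permOf_gOf ((Stmt9.avoid_iff _).mp π.2))
        right_inv := fun g => Stmt9.gOf_permOf g }
    rw [Nat.card_congr E]
    simp [Nat.card_eq_fintype_card]
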